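/- arXiv:0706.2634 — 5 statements merged into one kernel-verified Lean document; each statement's English description precedes it below -/
import Mathlib

section
/- Let N ≥ 1 and let P, Q be N×N complex matrices with det P = 0 and det Q = 0. Suppose that QP is regular semisimple (its characteristic polynomial has N distinct roots) and det(QP) = 0. Then ℂ^N is the internal direct sum of the range of Q and the kernel of P; that is, range(Q) ∩ ker(P) = {0} and range(Q) + ker(P) = ℂ^N. -/
/-!
Let `E = QP`. Since `χ_E` is squarefree, `X² ∤ χ_E`, so the generalized `0`-eigenspace of `E`,
whose dimension is the trailing degree of `χ_E`, has dimension at most one; and `E` is semisimple,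
so `range E ⊕ ker E = ℂ^N`. Now `0 ≠ ker P ⊆ ker E` and `range E ⊆ range Q ≠ ℂ^N`, and the bound
`dim ker E ≤ 1` forces both inclusions to be equalities.
-/

open Polynomial Module

theorem Polynomial.natTrailingDegree_le_one_of_squarefree {R : Type*} [CommSemiring R]
    [Nontrivial R] {p : R[X]} (hp : Squarefree p) : p.natTrailingDegree ≤ 1 := by
  by_contra! h
  have hX : X * X ∣ p := by
    rw [← pow_two]
    exact (pow_dvd_pow X h).trans
      (X_pow_dvd_iff.mpr fun _ ↦ coeff_eq_zero_of_lt_natTrailingDegree)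
  exact not_isUnit_X (hp X hX)

theorem Matrix.ker_mulVecLin_ne_bot_of_det_eq_zero {n K : Type*} [Fintype n] [DecidableEq n]
    [Field K] {M : Matrix n n K} (hM : M.det = 0) : LinearMap.ker M.mulVecLin ≠ ⊥ := by
  obtain ⟨v, hv, hMv⟩ := Matrix.exists_mulVec_eq_zero_iff.mpr hM
  exact fun h ↦ hv (Matrix.ker_mulVecLin_eq_bot_iff.mp h v hMv)

section

variable {K U V W : Type*} [Field K] [AddCommGroup U] [Module K U] [AddCommGroup V] [Module K V]
  [AddCommGroup W] [Module K W]

theorem Module.End.IsSemisimple.disjoint_range_ker {E : End K V} (hE : E.IsSemisimple) :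
    Disjoint (LinearMap.range E) (LinearMap.ker E) := by
  rw [Submodule.disjoint_def]
  rintro - ⟨w, rfl⟩ hw
  have hw : w ∈ E.maxGenEigenspace 0 :=
    (mem_maxGenEigenspace _ _ _).mpr ⟨2, by simpa [pow_two] using hw⟩
  rwa [hE.isFinitelySemisimple.maxGenEigenspace_eq_eigenspace, eigenspace_zero] at hw

variable [FiniteDimensional K V]

theorem Module.End.isCompl_range_ker_of_squarefree_charpoly {E : End K V}
    (hE : Squarefree E.charpoly) : IsCompl (LinearMap.range E) (LinearMap.ker E) :=
  (Submodule.isCompl_iff_disjoint _ _ E.finrank_range_add_finrank_ker.ge).mpr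
    (isSemisimple_of_squarefree_aeval_eq_zero hE E.aeval_self_charpoly).disjoint_range_ker

theorem Module.End.finrank_ker_le_one_of_squarefree_charpoly {E : End K V}
    (hE : Squarefree E.charpoly) : finrank K (LinearMap.ker E) ≤ 1 :=
  calc finrank K (LinearMap.ker E) ≤ finrank K (E.maxGenEigenspace 0) :=
        Submodule.finrank_mono (E.eigenspace_zero ▸ eigenspace_le_maxGenEigenspace)
    _ = E.charpoly.natTrailingDegree := LinearMap.finrank_maxGenEigenspace_zero_eq E
    _ ≤ 1 := natTrailingDegree_le_one_of_squarefree hE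

theorem LinearMap.ker_eq_ker_comp_of_finrank_ker_comp_le_one {f : V →ₗ[K] W} {g : W →ₗ[K] U}
    (hf : ker f ≠ ⊥) (hgf : finrank K (ker (g ∘ₗ f)) ≤ 1) : ker f = ker (g ∘ₗ f) :=
  Submodule.eq_of_le_of_finrank_le (ker_le_ker_comp f g)
    (hgf.trans (Submodule.one_le_finrank_iff.mpr hf))

theorem LinearMap.range_eq_range_comp_of_finrank_ker_comp_le_one {f g : End K V}
    (hg : ker g ≠ ⊥) (hgf : finrank K (ker (g ∘ₗ f)) ≤ 1) : range g = range (g ∘ₗ f) := by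
  refine (Submodule.eq_of_le_of_finrank_le (range_comp_le_range f g) ?_).symm
  have := Submodule.one_le_finrank_iff.mpr hg
  have := g.finrank_range_add_finrank_ker
  have := (g ∘ₗ f).finrank_range_add_finrank_ker
  omega

end

theorem range_ker_compl_of_regular_semisimple_general (N : ℕ)
    (P Q : Matrix (Fin N) (Fin N) ℂ)
    (hP : P.det = 0) (hQ : Q.det = 0)
    (hss : Squarefree (Q * P).charpoly) :
    LinearMap.range Q.mulVecLin ⊓ LinearMap.ker P.mulVecLin = ⊥ ∧
      LinearMap.range Q.mulVecLin ⊔ LinearMap.ker P.mulVecLin = ⊤ := by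
  rw [← Matrix.charpoly_mulVecLin, Matrix.mulVecLin_mul] at hss
  have hker := Module.End.finrank_ker_le_one_of_squarefree_charpoly hss
  have hcompl := Module.End.isCompl_range_ker_of_squarefree_charpoly hss
  rw [LinearMap.ker_eq_ker_comp_of_finrank_ker_comp_le_one
      (Matrix.ker_mulVecLin_ne_bot_of_det_eq_zero hP) hker,
    LinearMap.range_eq_range_comp_of_finrank_ker_comp_le_one
      (Matrix.ker_mulVecLin_ne_bot_of_det_eq_zero hQ) hker]
  exact ⟨hcompl.inf_eq_bot, hcompl.sup_eq_top⟩

/-- If `P`, `Q` are singular `N×N` complex matrices such that `QP` is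
regular semisimple (squarefree characteristic polynomial) and singular, then
`ℂ^N = range Q ⊕ ker P` internally: the intersection is trivial and the sum is
everything. -/
theorem range_ker_compl_of_regular_semisimple (N : ℕ) (hN : 1 ≤ N)
    (P Q : Matrix (Fin N) (Fin N) ℂ)
    (hP : P.det = 0) (hQ : Q.det = 0)
    (hss : Squarefree (Q * P).charpoly) (hQPdet : (Q * P).det = 0) :
    LinearMap.range Q.mulVecLin ⊓ LinearMap.ker P.mulVecLin = ⊥ ∧
      LinearMap.range Q.mulVecLin ⊔ LinearMap.ker P.mulVecLin = ⊤ :=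
  range_ker_compl_of_regular_semisimple_general N P Q hP hQ hss
end

section
/- Let N ≥ 1 and let B be an N×N complex matrix that is regular semisimple (its characteristic polynomial has N distinct roots) with det B = 0. Suppose P, Q, P', Q' are N×N complex matrices with PQ = B, P'Q' = B, and det P = det Q = det P' = det Q' = 0. Then there exists an invertible N×N complex matrix g such that P' = P g^{-1} and Q' = g Q. -/
/-!
The right factor `Q` of a factorization `B = P Q` with `Q` singular satisfies
`0 ≠ ker Q ⊆ ker B`, and `ker B` is a line because the eigenvalue `0` of `B` is a simple root of
its characteristic polynomial; hence `ker Q = ker B`. Consequently `range Q` (a hyperplane) meets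
`ker P` trivially, and since `P` is singular, `V = range Q ⊕ ker P`. Given a second factorization
`B = P' Q'` of the same kind, the automorphism `g` sending `Q x ↦ Q' x` on `range Q` (well defined
as `ker Q = ker Q'`) and the line `ker P` onto the line `ker P'` satisfies `g Q = Q'` and `P' g = P`.
-/

open Module LinearMap Polynomial Submodule

theorem Polynomial.rootMultiplicity_le_one_of_squarefree {R : Type*} [CommRing R] [Nontrivial R]
    {p : R[X]} (hp : Squarefree p) (a : R) : p.rootMultiplicity a ≤ 1 :=
  (rootMultiplicity_le_iff hp.ne_zero a 1).2 fun hdvd ↦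
    not_isUnit_X_sub_C a (hp _ (by rwa [← sq]))

theorem LinearMap.finrank_ker_le_one_of_squarefree_charpoly {K V : Type*} [Field K]
    [AddCommGroup V] [Module K V] [FiniteDimensional K V] {f : Module.End K V}
    (hf : Squarefree f.charpoly) : finrank K (ker f) ≤ 1 := by
  have hker : ker f ≤ f.maxGenEigenspace 0 := by
    rw [← Module.End.eigenspace_zero]
    exact Module.End.eigenspace_le_maxGenEigenspace
  calc finrank K (ker f) ≤ finrank K (f.maxGenEigenspace 0) := Submodule.finrank_mono hker
    _ = f.charpoly.rootMultiplicity 0 := by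
      rw [f.finrank_maxGenEigenspace_zero_eq, rootMultiplicity_eq_natTrailingDegree']
    _ ≤ 1 := rootMultiplicity_le_one_of_squarefree hf 0

namespace LinearMap

section Ring

variable {R V W U : Type*} [Ring R] [AddCommGroup V] [Module R V] [AddCommGroup W] [Module R W]
  [AddCommGroup U] [Module R U]

noncomputable def rangeEquivOfKerEq {q q' : W →ₗ[R] V} (h : ker q = ker q') :
    range q ≃ₗ[R] range q' :=
  q.quotKerEquivRange.symm ≪≫ₗ Submodule.quotEquivOfEq _ _ h ≪≫ₗ q'.quotKerEquivRange

@[simp]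
theorem rangeEquivOfKerEq_apply {q q' : W →ₗ[R] V} (h : ker q = ker q') (x : W) :
    (rangeEquivOfKerEq h ⟨q x, mem_range_self q x⟩ : V) = q' x := by
  simp only [rangeEquivOfKerEq, LinearEquiv.trans_apply, quotKerEquivRange_symm_apply_image,
    mkQ_apply, quotEquivOfEq_mk, quotKerEquivRange_apply_mk]

theorem disjoint_range_ker_of_ker_comp_le {q : W →ₗ[R] V} {p : V →ₗ[R] U}
    (h : ker (p ∘ₗ q) ≤ ker q) : Disjoint (range q) (ker p) := by
  rw [disjoint_def]
  rintro _ ⟨x, rfl⟩ hx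
  exact h hx

end Ring

variable {K V W U : Type*} [Field K] [AddCommGroup V] [Module K V] [AddCommGroup W] [Module K W]
  [AddCommGroup U] [Module K U]

theorem ker_eq_ker_comp_of_finrank_ker_comp_le_one_s5 [FiniteDimensional K W] {q : W →ₗ[K] V}
    (p : V →ₗ[K] U) (hq : ker q ≠ ⊥) (h : finrank K (ker (p ∘ₗ q)) ≤ 1) :
    ker q = ker (p ∘ₗ q) :=
  eq_of_le_of_finrank_le (ker_le_ker_comp q p)
    (h.trans (Nat.one_le_iff_ne_zero.2 (mt Submodule.finrank_eq_zero.1 hq)))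

theorem isCompl_range_ker_of_finrank_ker_comp_le_one [FiniteDimensional K V] {p q : V →ₗ[K] V}
    (h : finrank K (ker (p ∘ₗ q)) ≤ 1) (hp : ker p ≠ ⊥) (hq : ker q ≠ ⊥) :
    IsCompl (range q) (ker p) := by
  have hker := ker_eq_ker_comp_of_finrank_ker_comp_le_one_s5 p hq h
  refine (isCompl_iff_disjoint _ _ ?_).2 (disjoint_range_ker_of_ker_comp_le hker.ge)
  have hrank := finrank_range_add_finrank_ker q
  have hp_pos := Nat.one_le_iff_ne_zero.2 (mt Submodule.finrank_eq_zero.1 hp)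
  rw [hker] at hrank
  omega

theorem exists_linearEquiv_comp_eq_of_isCompl [FiniteDimensional K V] {q q' : W →ₗ[K] V}
    {p p' : V →ₗ[K] U} (hc : IsCompl (range q) (ker p)) (hc' : IsCompl (range q') (ker p'))
    (hker : ker q = ker q') (hpq : p ∘ₗ q = p' ∘ₗ q') :
    ∃ e : V ≃ₗ[K] V, e ∘ₗ q = q' ∧ p' ∘ₗ e = p := by
  have hdim : finrank K (ker p) = finrank K (ker p') := by
    have := finrank_add_eq_of_isCompl hc
    have := finrank_add_eq_of_isCompl hc'
    have := (rangeEquivOfKerEq hker).finrank_eq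
    omega
  let e := (prodEquivOfIsCompl _ _ hc).symm ≪≫ₗ
    (rangeEquivOfKerEq hker).prodCongr (LinearEquiv.ofFinrankEq _ _ hdim) ≪≫ₗ
    prodEquivOfIsCompl _ _ hc'
  have he_range (x : W) : e (q x) = q' x := by
    simp [e, prodEquivOfIsCompl_symm_apply_left _ _ hc ⟨q x, mem_range_self q x⟩]
  have he_ker (v : V) (hv : v ∈ ker p) : e v ∈ ker p' := by
    simp [e, prodEquivOfIsCompl_symm_apply_right _ _ hc ⟨v, hv⟩]
  refine ⟨e, LinearMap.ext he_range, ext_on_codisjoint hc.codisjoint ?_ ?_⟩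
  · rintro _ ⟨x, rfl⟩
    simpa [he_range] using (LinearMap.congr_fun hpq x).symm
  · intro v hv
    simp only [coe_comp, LinearEquiv.coe_coe, Function.comp_apply, mem_ker.1 (he_ker v hv),
      mem_ker.1 hv]

end LinearMap

theorem Module.End.exists_unit_of_mul_eq_mul {K V : Type*} [Field K] [AddCommGroup V] [Module K V]
    [FiniteDimensional K V] {p q p' q' : Module.End K V} (hpq : p * q = p' * q')
    (h : finrank K (ker (p * q)) ≤ 1) (hp : ker p ≠ ⊥) (hq : ker q ≠ ⊥) (hp' : ker p' ≠ ⊥)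
    (hq' : ker q' ≠ ⊥) :
    ∃ g : (Module.End K V)ˣ, p' = p * ↑g⁻¹ ∧ q' = ↑g * q := by
  rw [Module.End.mul_eq_comp, Module.End.mul_eq_comp] at hpq
  rw [Module.End.mul_eq_comp] at h
  have h' : finrank K (ker (p' ∘ₗ q')) ≤ 1 := hpq ▸ h
  have hc := isCompl_range_ker_of_finrank_ker_comp_le_one h hp hq
  have hc' := isCompl_range_ker_of_finrank_ker_comp_le_one h' hp' hq'
  have hker : ker q = ker q' := by
    rw [ker_eq_ker_comp_of_finrank_ker_comp_le_one_s5 p hq h, hpq,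
      ← ker_eq_ker_comp_of_finrank_ker_comp_le_one_s5 p' hq' h']
  obtain ⟨e, he_q, he_p⟩ := exists_linearEquiv_comp_eq_of_isCompl hc hc' hker hpq
  refine ⟨(GeneralLinearGroup.generalLinearEquiv K V).symm e, ?_, he_q.symm⟩
  rw [← he_p]
  ext v
  exact congrArg p' (e.apply_symm_apply v).symm

theorem closed_orbit_unique_general (N : ℕ)
    (B P Q P' Q' : Matrix (Fin N) (Fin N) ℂ)
    (hss : Squarefree B.charpoly)
    (hPQ : P * Q = B) (hPQ' : P' * Q' = B)
    (hP : P.det = 0) (hQ : Q.det = 0) (hP' : P'.det = 0) (hQ' : Q'.det = 0) :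
    ∃ g : (Matrix (Fin N) (Fin N) ℂ)ˣ,
      P' = P * (↑g⁻¹ : Matrix (Fin N) (Fin N) ℂ) ∧
      Q' = (↑g : Matrix (Fin N) (Fin N) ℂ) * Q := by
  let φ := Matrix.toLinAlgEquiv' (R := ℂ) (n := Fin N)
  have hker {M : Matrix (Fin N) (Fin N) ℂ} (hM : M.det = 0) : ker (φ M) ≠ ⊥ :=
    (bot_lt_ker_of_det_eq_zero <| by
      change LinearMap.det (Matrix.toLin' M) = 0
      rwa [det_toLin']).ne'
  have hB : finrank ℂ (ker (φ P * φ Q)) ≤ 1 := by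
    rw [← map_mul, hPQ]
    exact finrank_ker_le_one_of_squarefree_charpoly (by rwa [← Matrix.charpoly_toLin'] at hss)
  obtain ⟨g, hPg, hQg⟩ := Module.End.exists_unit_of_mul_eq_mul
    (by rw [← map_mul, ← map_mul, hPQ, hPQ']) hB (hker hP) (hker hQ) (hker hP') (hker hQ')
  refine ⟨Units.map φ.symm.toMonoidHom g, φ.injective ?_, φ.injective ?_⟩
  · simpa using hPg
  · simpa using hQg

/-- Over a singular regular semisimple matrix `B`, any two factorizations
`B = PQ = P'Q'` with all four factors singular are related by the `GL_N(ℂ)` action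
`g · (P, Q) = (P g⁻¹, g Q)`: the singular locus of the fibre is a single orbit. -/
theorem closed_orbit_unique (N : ℕ) (hN : 1 ≤ N)
    (B P Q P' Q' : Matrix (Fin N) (Fin N) ℂ)
    (hss : Squarefree B.charpoly) (hBdet : B.det = 0)
    (hPQ : P * Q = B) (hPQ' : P' * Q' = B)
    (hP : P.det = 0) (hQ : Q.det = 0) (hP' : P'.det = 0) (hQ' : Q'.det = 0) :
    ∃ g : (Matrix (Fin N) (Fin N) ℂ)ˣ,
      P' = P * (↑g⁻¹ : Matrix (Fin N) (Fin N) ℂ) ∧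
      Q' = (↑g : Matrix (Fin N) (Fin N) ℂ) * Q :=
  closed_orbit_unique_general N B P Q P' Q' hss hPQ hPQ' hP hQ hP' hQ'
end

section
/- Let N ≥ 1 and let B be an N×N complex matrix that is regular semisimple (its characteristic polynomial has N distinct roots) with det B = 0. Let P, Q be N×N complex matrices with PQ = B. Then the closure (in the standard topology on pairs of N×N complex matrices) of the orbit { (P g^{-1}, g Q) : g ∈ GL_N(ℂ) } contains a pair (P', Q') with P'Q' = B, det P' = 0, and det Q' = 0. -/
/-!
Since `det P * det Q = det B = 0`, one factor is singular; say `P * e = 0` for a nonzero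
idempotent `e`. The units `g t = t • e + (1 - e)` satisfy `P * (g t)⁻¹ = P`, while
`g t * Q → (1 - e) * Q` as `t → 0`. The limit pair still multiplies to `P * Q`, and `1 - e` is
singular because it kills `e`. A singular `Q` is handled symmetrically with `e * Q = 0`.
-/

open Filter Topology Matrix

section Orbit

variable {A : Type*} [Ring A]

def factorOrbit (p q : A) : Set (A × A) :=
  {x | ∃ g : Aˣ, x = (p * ↑g⁻¹, ↑g * q)}

namespace IsIdempotentElem

variable {𝕜 : Type*} [Field 𝕜] [Algebra 𝕜 A] {e : A}

theorem smul_add_one_sub_mul (he : IsIdempotentElem e) (a b : 𝕜) :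
    (a • e + (1 - e)) * (b • e + (1 - e)) = (a * b) • e + (1 - e) := by
  simp only [add_mul, mul_add, smul_mul_assoc, mul_smul_comm, smul_smul, mul_comm b, he.eq,
    he.mul_one_sub_self, he.one_sub_mul_self, he.one_sub.eq, smul_zero, add_zero, zero_add]

def scaleUnits (he : IsIdempotentElem e) : 𝕜ˣ →* Aˣ where
  toFun t :=
    { val := (t : 𝕜) • e + (1 - e)
      inv := ((t⁻¹ : 𝕜ˣ) : 𝕜) • e + (1 - e)
      val_inv := by rw [he.smul_add_one_sub_mul, Units.mul_inv, one_smul, add_sub_cancel]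
      inv_val := by rw [he.smul_add_one_sub_mul, Units.inv_mul, one_smul, add_sub_cancel] }
  map_one' := by ext; simp
  map_mul' s t := by ext; simp [he.smul_add_one_sub_mul]

theorem coe_scaleUnits (he : IsIdempotentElem e) (t : 𝕜ˣ) :
    (he.scaleUnits t : A) = (t : 𝕜) • e + (1 - e) := rfl

end IsIdempotentElem

variable [TopologicalSpace A] [IsTopologicalRing A]

theorem mk_one_sub_mul_mem_closure_factorOrbit (𝕜 : Type*) [NontriviallyNormedField 𝕜]
    [Algebra 𝕜 A] [ContinuousSMul 𝕜 A] {p q e : A} (he : IsIdempotentElem e)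
    (hpe : p * e = 0) : (p, (1 - e) * q) ∈ closure (factorOrbit p q) := by
  have hlim :
      Tendsto (fun t : 𝕜 => (p, (t • e + (1 - e)) * q)) (𝓝[≠] 0) (𝓝 (p, (1 - e) * q)) := by
    have : Continuous fun t : 𝕜 => (p, (t • e + (1 - e)) * q) := by fun_prop
    simpa using (this.tendsto 0).mono_left nhdsWithin_le_nhds
  refine mem_closure_of_tendsto hlim ?_
  filter_upwards [self_mem_nhdsWithin] with t (ht : t ≠ 0)
  refine ⟨he.scaleUnits (Units.mk0 t ht), ?_⟩
  rw [← map_inv, IsIdempotentElem.coe_scaleUnits, IsIdempotentElem.coe_scaleUnits]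
  simp [mul_add, mul_sub, hpe]

theorem mk_mul_one_sub_mem_closure_factorOrbit (𝕜 : Type*) [NontriviallyNormedField 𝕜]
    [Algebra 𝕜 A] [ContinuousSMul 𝕜 A] {p q e : A} (he : IsIdempotentElem e)
    (heq : e * q = 0) : (p * (1 - e), q) ∈ closure (factorOrbit p q) := by
  have hlim :
      Tendsto (fun t : 𝕜 => (p * (t • e + (1 - e)), q)) (𝓝[≠] 0) (𝓝 (p * (1 - e), q)) := by
    have : Continuous fun t : 𝕜 => (p * (t • e + (1 - e)), q) := by fun_prop
    simpa using (this.tendsto 0).mono_left nhdsWithin_le_nhds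
  refine mem_closure_of_tendsto hlim ?_
  filter_upwards [self_mem_nhdsWithin] with t (ht : t ≠ 0)
  refine ⟨he.scaleUnits (Units.mk0 t ht)⁻¹, ?_⟩
  rw [← map_inv, inv_inv, IsIdempotentElem.coe_scaleUnits, IsIdempotentElem.coe_scaleUnits]
  simp [add_mul, sub_mul, heq]

end Orbit

namespace Matrix

variable {n K : Type*} [Fintype n] [DecidableEq n] [Field K]

theorem exists_isIdempotentElem_mul_eq_zero_right {P : Matrix n n K} (hP : P.det = 0) :
    ∃ E : Matrix n n K, IsIdempotentElem E ∧ E ≠ 0 ∧ P * E = 0 := by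
  obtain ⟨v, hv, hPv⟩ := exists_mulVec_eq_zero_iff.mpr hP
  obtain ⟨i, hi⟩ := Function.ne_iff.mp hv
  have hwv : Pi.single i (v i)⁻¹ ⬝ᵥ v = 1 := by
    rw [single_dotProduct, inv_mul_cancel₀ hi]
  refine ⟨vecMulVec v (Pi.single i (v i)⁻¹), ?_, fun h => ?_, ?_⟩
  · rw [IsIdempotentElem, vecMulVec_mul_vecMulVec, hwv, one_smul]
  · exact hi (by simpa [vecMulVec_apply] using congr_fun₂ h i i)
  · rw [mul_vecMulVec, hPv, zero_vecMulVec]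

theorem exists_isIdempotentElem_mul_eq_zero_left {Q : Matrix n n K} (hQ : Q.det = 0) :
    ∃ E : Matrix n n K, IsIdempotentElem E ∧ E ≠ 0 ∧ E * Q = 0 := by
  obtain ⟨E, hE, hE0, hQE⟩ :=
    exists_isIdempotentElem_mul_eq_zero_right (P := Qᵀ) (by rwa [det_transpose])
  refine ⟨Eᵀ, ?_, by rwa [Ne, transpose_eq_zero], ?_⟩
  · rw [IsIdempotentElem, ← transpose_mul, hE.eq]
  · rw [← transpose_transpose Q, ← transpose_mul, hQE, transpose_zero]

theorem det_one_sub_eq_zero_of_isIdempotentElem {E : Matrix n n K} (hE : IsIdempotentElem E)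
    (hE0 : E ≠ 0) :
    (1 - E).det = 0 := by
  by_contra h
  have hunit : IsUnit (1 - E) := (isUnit_iff_isUnit_det _).mpr (isUnit_iff_ne_zero.mpr h)
  exact hE0 (hunit.mul_right_eq_zero.mp hE.one_sub_mul_self)

end Matrix

theorem orbit_closure_contains_singular_pair_general (N : ℕ)
    (B P Q : Matrix (Fin N) (Fin N) ℂ)
    (hBdet : B.det = 0)
    (hPQ : P * Q = B) :
    ∃ p : Matrix (Fin N) (Fin N) ℂ × Matrix (Fin N) (Fin N) ℂ,
      p ∈ closure {x : Matrix (Fin N) (Fin N) ℂ × Matrix (Fin N) (Fin N) ℂ |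
          ∃ g : (Matrix (Fin N) (Fin N) ℂ)ˣ,
            x = (P * (↑g⁻¹ : Matrix (Fin N) (Fin N) ℂ),
                 (↑g : Matrix (Fin N) (Fin N) ℂ) * Q)} ∧
      p.1 * p.2 = B ∧ p.1.det = 0 ∧ p.2.det = 0 := by
  have hdet : P.det * Q.det = 0 := by rw [← det_mul, hPQ, hBdet]
  rcases mul_eq_zero.mp hdet with hP | hQ
  · obtain ⟨E, hE, hE0, hPE⟩ := exists_isIdempotentElem_mul_eq_zero_right hP
    refine ⟨(P, (1 - E) * Q), mk_one_sub_mul_mem_closure_factorOrbit ℂ hE hPE, ?_, hP, ?_⟩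
    · rw [← mul_assoc, mul_sub, mul_one, hPE, sub_zero, hPQ]
    · rw [det_mul, det_one_sub_eq_zero_of_isIdempotentElem hE hE0, zero_mul]
  · obtain ⟨E, hE, hE0, hEQ⟩ := exists_isIdempotentElem_mul_eq_zero_left hQ
    refine ⟨(P * (1 - E), Q), mk_mul_one_sub_mem_closure_factorOrbit ℂ hE hEQ, ?_, ?_, hQ⟩
    · rw [mul_assoc, sub_mul, one_mul, hEQ, sub_zero, hPQ]
    · rw [det_mul, det_one_sub_eq_zero_of_isIdempotentElem hE hE0, mul_zero]

/-- For a singular regular semisimple `B = PQ`, the closure of the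
`GL_N(ℂ)`-orbit `{(P g⁻¹, g Q)}` (in the standard topology on pairs of matrices)
contains a pair `(P', Q')` with `P'Q' = B` and both factors singular. -/
theorem orbit_closure_contains_singular_pair (N : ℕ) (hN : 1 ≤ N)
    (B P Q : Matrix (Fin N) (Fin N) ℂ)
    (hss : Squarefree B.charpoly) (hBdet : B.det = 0)
    (hPQ : P * Q = B) :
    ∃ p : Matrix (Fin N) (Fin N) ℂ × Matrix (Fin N) (Fin N) ℂ,
      p ∈ closure {x : Matrix (Fin N) (Fin N) ℂ × Matrix (Fin N) (Fin N) ℂ |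
          ∃ g : (Matrix (Fin N) (Fin N) ℂ)ˣ,
            x = (P * (↑g⁻¹ : Matrix (Fin N) (Fin N) ℂ),
                 (↑g : Matrix (Fin N) (Fin N) ℂ) * Q)} ∧
      p.1 * p.2 = B ∧ p.1.det = 0 ∧ p.2.det = 0 :=
  orbit_closure_contains_singular_pair_general N B P Q hBdet hPQ
end

section
/- Let A_1, A_2, A_3, A_4 be 2×2 complex matrices and θ_1, θ_2, θ_3, θ_4 ∈ ℂ, such that for each i the matrix A_i has trace θ_i and determinant 0 (equivalently, characteristic polynomial X(X − θ_i), i.e. eigenvalues 0 and θ_i), and such that A_1 + A_2 + A_3 + A_4 = ν·Id with ν = (θ_1 + θ_2 + θ_3 + θ_4)/2. If there exists a nonzero vector v ∈ ℂ² that is a common eigenvector of A_1, A_2, A_3, A_4 (i.e. for each i, A_i v = c_i v for some c_i ∈ ℂ), then there exist signs s_1, s_2, s_3, s_4 ∈ {+1, −1} such that s_1 θ_1 + s_2 θ_2 + s_3 θ_3 + s_4 θ_4 = 0. -/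
/-!
The eigenvalue `c i` of `A i` at a common eigenvector `v` is a root of the characteristic
polynomial `X (X - θ i)`, so `c i ∈ {0, θ i}`. Applying `∑ A i = ν • 1` to `v` gives
`∑ c i = ν = (∑ θ i) / 2`, so with `s i = -1` where `c i = 0` and `s i = 1` where `c i = θ i`,
`∑ s i θ i = ∑ (2 c i - θ i) = 0`.
-/

open Polynomial

namespace Matrix

theorem isRoot_charpoly_of_mulVec_eq_smul {n K : Type*} [Fintype n] [DecidableEq n] [Field K]
    {M : Matrix n n K} {v : n → K} {c : K} (hv : v ≠ 0) (h : M *ᵥ v = c • v) :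
    M.charpoly.IsRoot c := by
  rw [IsRoot, eval_charpoly, ← exists_mulVec_eq_zero_iff]
  exact ⟨v, hv, by simp [sub_mulVec, h]⟩

theorem eq_zero_or_eq_trace_of_isRoot_charpoly_of_det_eq_zero {K : Type*} [Field K]
    {M : Matrix (Fin 2) (Fin 2) K} (hdet : M.det = 0) {c : K} (hc : M.charpoly.IsRoot c) :
    c = 0 ∨ c = M.trace := by
  rw [charpoly_fin_two, hdet, IsRoot, eval_add, eval_sub, eval_pow, eval_mul, eval_X, eval_C,
    eval_C, add_zero, sq, ← sub_mul, mul_eq_zero, sub_eq_zero] at hc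
  exact hc.symm

theorem sum_eigenvalues_eq_of_sum_eq_smul_one {ι n K : Type*} [Fintype ι] [Fintype n]
    [DecidableEq n] [Field K] {A : ι → Matrix n n K} {c : ι → K} {ν : K} {v : n → K}
    (hv : v ≠ 0) (hA : ∀ i, A i *ᵥ v = c i • v) (hsum : ∑ i, A i = ν • 1) :
    ∑ i, c i = ν := by
  apply smul_left_injective K hv
  simp only
  rw [Finset.sum_smul, ← Finset.sum_congr rfl fun i _ => hA i, ← sum_mulVec, hsum,
    smul_mulVec, one_mulVec]

end Matrix

theorem exists_signs_sum_mul_eq_zero_of_two_mul_sum_eq {ι R : Type*} [Fintype ι] [CommRing R]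
    {c θ : ι → R} (hc : ∀ i, c i = 0 ∨ c i = θ i) (hsum : 2 * ∑ i, c i = ∑ i, θ i) :
    ∃ s : ι → R, (∀ i, s i = 1 ∨ s i = -1) ∧ ∑ i, s i * θ i = 0 := by
  classical
  refine ⟨fun i => if c i = 0 then -1 else 1, fun i => by dsimp only; split_ifs <;> simp, ?_⟩
  have hterm : ∀ i, (if c i = 0 then (-1 : R) else 1) * θ i = 2 * c i - θ i := by
    intro i
    by_cases h0 : c i = 0
    · rw [if_pos h0, h0]; ring
    · rw [if_neg h0, (hc i).resolve_left h0]; ring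
  simp only [hterm, Finset.sum_sub_distrib, ← Finset.mul_sum, hsum, sub_self]

/-- If four `2×2` rank-one residues `A i` (trace `θ i`, determinant `0`)
sum to the scalar matrix `ν·Id` with `ν = (∑ θ i)/2`, and they admit a common
eigenvector, then `∑ ± θ i = 0` for some choice of signs. -/
theorem common_eigenvector_implies_theta_relation
    (A : Fin 4 → Matrix (Fin 2) (Fin 2) ℂ) (θ : Fin 4 → ℂ) (ν : ℂ)
    (htr : ∀ i, (A i).trace = θ i) (hdet : ∀ i, (A i).det = 0)
    (hν : ν = (∑ i, θ i) / 2)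
    (hsum : ∑ i, A i = ν • (1 : Matrix (Fin 2) (Fin 2) ℂ))
    (v : Fin 2 → ℂ) (hv : v ≠ 0)
    (heig : ∀ i, ∃ c : ℂ, (A i).mulVec v = c • v) :
    ∃ s : Fin 4 → ℂ, (∀ i, s i = 1 ∨ s i = -1) ∧ ∑ i, s i * θ i = 0 := by
  choose c hc using heig
  have hc_mem : ∀ i, c i = 0 ∨ c i = θ i := fun i => htr i ▸
    Matrix.eq_zero_or_eq_trace_of_isRoot_charpoly_of_det_eq_zero (hdet i)
      (Matrix.isRoot_charpoly_of_mulVec_eq_smul hv (hc i))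
  have hc_sum : ∑ i, c i = ν := Matrix.sum_eigenvalues_eq_of_sum_eq_smul_one hv hc hsum
  refine exists_signs_sum_mul_eq_zero_of_two_mul_sum_eq hc_mem ?_
  rw [hc_sum, hν]
  ring
end

section
/- Let λ_1, λ_2, λ_3 ∈ ℂ and let A_1 ∈ M_{2×1}(ℂ), B_1 ∈ M_{1×2}(ℂ), A_2 ∈ M_{3×2}(ℂ), B_2 ∈ M_{2×3}(ℂ), A_3 ∈ M_{4×3}(ℂ), B_3 ∈ M_{3×4}(ℂ) be complex matrices satisfying the moment map equations B_1 A_1 = −λ_1 · Id_1, A_1 B_1 − B_2 A_2 = λ_2 · Id_2, and A_2 B_2 − B_3 A_3 = λ_3 · Id_3. Then the 4×4 matrix A_3 B_3 has characteristic polynomial X(X + λ_3)(X + λ_3 + λ_2)(X + λ_3 + λ_2 + λ_1); that is, its eigenvalues are 0, −λ_3, −λ_3 − λ_2, and −λ_3 − λ_2 − λ_1. -/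
/-!
Since `X ^ q * χ(A B) = X ^ p * χ(B A)` for `A : p × q` and `B : q × p`, a moment map equation
`M - B A = λ` gives `χ(A B) = X ^ (p - q) * χ(M)(X + λ)`. Descending the leg from the central
node to the node of dimension `1`, where `B₁ A₁ = -λ₁` is scalar, produces the four eigenvalues.
-/

open Polynomial

open Matrix

theorem Matrix.charpoly_mul_eq_of_sub_mul_eq {R m n : Type*} [CommRing R]
    [Fintype m] [DecidableEq m] [Fintype n] [DecidableEq n]
    {A : Matrix m n R} {B : Matrix n m R} {M : Matrix n n R} {lam : R}
    (h : M - B * A = lam • (1 : Matrix n n R)) (hle : Fintype.card n ≤ Fintype.card m) :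
    (A * B).charpoly = X ^ (Fintype.card m - Fintype.card n) * M.charpoly.comp (X + C lam) := by
  have hBA : B * A = M - scalar n lam := by
    rw [scalar_apply, ← smul_one_eq_diagonal, ← h, sub_sub_cancel]
  rw [charpoly_mul_comm_of_le A B hle, hBA, charpoly_sub_scalar]

/-- For a representation of a leg of a star-shaped quiver with
dimensions `1, 2, 3, 4` satisfying the moment map equations
`B₁A₁ = −λ₁`, `A₁B₁ − B₂A₂ = λ₂`, `A₂B₂ − B₃A₃ = λ₃`, the endomorphism `A₃B₃` at the
top node has eigenvalues `0, −λ₃, −λ₃−λ₂, −λ₃−λ₂−λ₁`. -/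
theorem leg_moment_map_eigenvalues (lam₁ lam₂ lam₃ : ℂ)
    (A₁ : Matrix (Fin 2) (Fin 1) ℂ) (B₁ : Matrix (Fin 1) (Fin 2) ℂ)
    (A₂ : Matrix (Fin 3) (Fin 2) ℂ) (B₂ : Matrix (Fin 2) (Fin 3) ℂ)
    (A₃ : Matrix (Fin 4) (Fin 3) ℂ) (B₃ : Matrix (Fin 3) (Fin 4) ℂ)
    (h₁ : B₁ * A₁ = (-lam₁) • (1 : Matrix (Fin 1) (Fin 1) ℂ))
    (h₂ : A₁ * B₁ - B₂ * A₂ = lam₂ • (1 : Matrix (Fin 2) (Fin 2) ℂ))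
    (h₃ : A₂ * B₂ - B₃ * A₃ = lam₃ • (1 : Matrix (Fin 3) (Fin 3) ℂ)) :
    (A₃ * B₃).charpoly =
      X * (X + C lam₃) * (X + C lam₃ + C lam₂) * (X + C lam₃ + C lam₂ + C lam₁) := by
  have h₁' : 0 - B₁ * A₁ = lam₁ • (1 : Matrix (Fin 1) (Fin 1) ℂ) := by
    rw [h₁, zero_sub, neg_smul, neg_neg]
  rw [charpoly_mul_eq_of_sub_mul_eq h₃ (by simp), charpoly_mul_eq_of_sub_mul_eq h₂ (by simp),
    charpoly_mul_eq_of_sub_mul_eq h₁' (by simp), charpoly_zero]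
  simp only [Fintype.card_fin, mul_comp, pow_comp, X_comp, add_comp, C_comp]
  ring
end
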